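/- arXiv:1805.03489 — 2 statements merged into one kernel-verified Lean document; each statement's English description precedes it below -/
import Mathlib

section
/- Let k be a field and α, β ∈ k nonzero. Let I be the two-sided ideal of the free algebra k⟨x, y, z⟩ generated by yx − αxy − x, zx − βxz − z, and zy − yz. Then the element (α − 1)·yz + z belongs to I. -/
/-!
Resolve the overlap ambiguity `zyx` in the two possible ways. Reducing `z(yx)` gives
`αβ·xyz + α·yz + β·xz + z`, reducing `(zy)x` gives `αβ·xyz + β·xz + yz`; both equal `zyx`
modulo the relations, so their difference `(α - 1)·yz + z` vanishes in the quotient algebra.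
-/

noncomputable section

/-- The generators x, y, z of the free algebra k⟨x, y, z⟩. -/
abbrev Xv (k : Type*) [Field k] : FreeAlgebra k (Fin 3) := FreeAlgebra.ι k 0
abbrev Yv (k : Type*) [Field k] : FreeAlgebra k (Fin 3) := FreeAlgebra.ι k 1
abbrev Zv (k : Type*) [Field k] : FreeAlgebra k (Fin 3) := FreeAlgebra.ι k 2

section Overlap

variable {k R : Type*} [CommRing k] [Ring R] [Algebra k R] {α β : k} {x y z : R}

theorem sub_one_smul_mul_add_eq_zero_of_relations (hyx : y * x = α • (x * y) + x)
    (hzx : z * x = β • (x * z) + z) (hzy : z * y = y * z) :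
    (α - 1) • (y * z) + z = 0 := by
  have reduce_yx : z * (y * x) = (α * β) • (x * (y * z)) + α • (y * z) + β • (x * z) + z := by
    rw [hyx, mul_add, mul_smul_comm, ← mul_assoc, hzx, add_mul, smul_mul_assoc, mul_assoc, hzy]
    module
  have reduce_zy : z * y * x = (α * β) • (x * (y * z)) + β • (x * z) + y * z := by
    rw [hzy, mul_assoc, hzx, mul_add, mul_smul_comm, ← mul_assoc, hyx, add_mul, smul_mul_assoc,
      mul_assoc]
    module
  calc (α - 1) • (y * z) + z = z * (y * x) - z * y * x := by rw [reduce_yx, reduce_zy]; module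
    _ = 0 := by rw [mul_assoc, sub_self]

theorem TwoSidedIdeal.mem_iff_mkₐ_eq_zero (I : TwoSidedIdeal R) (a : R) :
    a ∈ I ↔ I.ringCon.mkₐ k a = 0 :=
  (I.mem_iff a).trans (RingCon.eq _).symm

theorem TwoSidedIdeal.sub_one_smul_mul_add_mem (I : TwoSidedIdeal R)
    (hyx : y * x - α • (x * y) - x ∈ I) (hzx : z * x - β • (x * z) - z ∈ I)
    (hzy : z * y - y * z ∈ I) :
    (α - 1) • (y * z) + z ∈ I := by
  simp only [I.mem_iff_mkₐ_eq_zero (k := k), map_sub, map_mul, map_smul, map_add, sub_sub,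
    sub_eq_zero] at hyx hzx hzy ⊢
  exact sub_one_smul_mul_add_eq_zero_of_relations hyx hzx hzy

end Overlap

theorem stmt_8_general {k : Type*} [Field k] (α β : k) :
    (α - 1) • (Yv k * Zv k) + Zv k ∈
      TwoSidedIdeal.span
        {Yv k * Xv k - α • (Xv k * Yv k) - Xv k,
         Zv k * Xv k - β • (Xv k * Zv k) - Zv k,
         Zv k * Yv k - Yv k * Zv k} := by
  apply TwoSidedIdeal.sub_one_smul_mul_add_mem (β := β) (x := Xv k) <;>
    exact TwoSidedIdeal.subset_span (by simp)

theorem stmt_8 {k : Type*} [Field k] (α β : k) (hα : α ≠ 0) (hβ : β ≠ 0) :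
    (α - 1) • (Yv k * Zv k) + Zv k ∈
      TwoSidedIdeal.span
        {Yv k * Xv k - α • (Xv k * Yv k) - Xv k,
         Zv k * Xv k - β • (Xv k * Zv k) - Zv k,
         Zv k * Yv k - Yv k * Zv k} :=
  stmt_8_general α β
end
end

section
/- Let k be a field and β ∈ k nonzero. Let I be the two-sided ideal of the free algebra k⟨x, y, z⟩ generated by yx − xy − x, zx − βxz − z, and zy − yz (i.e., the case α = 1 of the previous example). Then z ∈ I, and hence the image of z in k⟨x, y, z⟩/I is zero. -/
noncomputable section

/-- The two-sided ideal generated by yx − xy − x, zx − βxz − z, zy − yz. -/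
def exIdeal (k : Type*) [Field k] (β : k) : TwoSidedIdeal (FreeAlgebra k (Fin 3)) :=
  TwoSidedIdeal.span
    {Yv k * Xv k - Xv k * Yv k - Xv k,
     Zv k * Xv k - β • (Xv k * Zv k) - Zv k,
     Zv k * Yv k - Yv k * Zv k}

/-!
The overlap `zyx` of the relations reduces in two ways: rewriting `yx` first gives
`z(xy + x) = βxyz + yz + βxz + z`, while rewriting `zy` first gives
`yzx = y(βxz + z) = βxyz + βxz + yz`; the difference is `z`.
-/

theorem eq_zero_of_overlap_zyx {R A : Type*} [CommSemiring R] [Ring A] [Algebra R A]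
    {x y z : A} (β : R) (hyx : y * x = x * y + x) (hzx : z * x = β • (x * z) + z)
    (hzy : z * y = y * z) : z = 0 := by
  have hzxy : z * x * y = β • (x * y * z) + y * z := by
    rw [hzx, add_mul, smul_mul_assoc, mul_assoc, hzy, ← mul_assoc]
  have via_yx : z * y * x = β • (x * y * z) + β • (x * z) + y * z + z := by
    rw [mul_assoc, hyx, mul_add, ← mul_assoc, hzxy, hzx]
    abel
  have via_zy : z * y * x = β • (x * y * z) + β • (x * z) + y * z := by
    rw [hzy, mul_assoc, hzx, mul_add, mul_smul_comm, ← mul_assoc, hyx, add_mul, smul_add]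
  simpa using via_yx.symm.trans via_zy

theorem stmt_9_general {k : Type*} [Field k] (β : k) :
    Zv k ∈ exIdeal k β ∧ (exIdeal k β).ringCon.mk' (Zv k) = 0 := by
  set f := (exIdeal k β).ringCon.mkₐ k
  have f_eq_zero_iff (r : FreeAlgebra k (Fin 3)) : f r = 0 ↔ r ∈ exIdeal k β := by
    rw [← TwoSidedIdeal.mem_ker]
    exact SetLike.ext_iff.mp (exIdeal k β).ker_ringCon_mk' r
  have hz : f (Zv k) = 0 := by
    refine eq_zero_of_overlap_zyx β (x := f (Xv k)) (y := f (Yv k)) ?_ ?_ ?_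
    · simpa [sub_sub, sub_eq_zero] using
        (f_eq_zero_iff _).mpr (TwoSidedIdeal.subset_span (.inl rfl))
    · simpa [sub_sub, sub_eq_zero] using
        (f_eq_zero_iff _).mpr (TwoSidedIdeal.subset_span (.inr (.inl rfl)))
    · simpa [sub_eq_zero] using
        (f_eq_zero_iff _).mpr (TwoSidedIdeal.subset_span (.inr (.inr rfl)))
  exact ⟨(f_eq_zero_iff _).mp hz, hz⟩

theorem stmt_9 {k : Type*} [Field k] (β : k) (hβ : β ≠ 0) :
    Zv k ∈ exIdeal k β ∧ (exIdeal k β).ringCon.mk' (Zv k) = 0 :=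
  stmt_9_general β
end
end
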